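/- arXiv:math/0512404 — 2 statements merged into one kernel-verified Lean document; each statement's English description precedes it below -/
import Mathlib

section
/- Assume Condition (TU): for every strictly increasing sequence (n_i) of positive integers and all irrational ω, ω' ∈ (0,1) whose squares ω² and ω'² differ by a dyadic rational, limsup_{i→∞} f_{n_i}(ω) = limsup_{i→∞} f_{n_i}(ω'). Then for every natural number s that is not a perfect square, lim_{n→∞} f_n(√s − ⌊√s⌋) = 1/2, i.e. √s is simply normal to base 2. -/
open Filter Finset Set

/-- The `n`-th binary digit of `α` (for `n ≥ 1`): `⌊2^n α⌋ − 2⌊2^{n−1} α⌋`. -/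
noncomputable def binDigit (α : ℝ) (n : ℕ) : ℤ :=
  ⌊(2:ℝ) ^ n * α⌋ - 2 * ⌊(2:ℝ) ^ (n - 1) * α⌋

/-- Relative frequency of the digit 1 among the first `n` binary digits of `α`. -/
noncomputable def digitFreq (α : ℝ) (n : ℕ) : ℝ :=
  (∑ i ∈ Finset.Icc 1 n, (binDigit α i : ℝ)) / n

/-!
Let `S = √s`, choose `2 ^ a > S` and put `ω = (S - 1) / 2 ^ a`, `ω' = 1 - S / 4 ^ a`. The cross
terms of `ω²` and `ω'²` are both `-2S / 4 ^ a`, so `ω² - ω'² = (s + 1) / 4 ^ a - 1 - s / 16 ^ a` is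
dyadic. Adding an integer does not change binary digits and halving shifts them by one place, so
up to `o(1)` the digit frequencies of `ω` are those of `fract S`, and those of `ω'` are one minus
them. Along a subsequence on which the frequencies of `fract S` tend to `c`, Condition (TU)
therefore gives `c = 1 - c`.
-/

open Topology

lemma Int.floor_two_mul_sub_two_mul_floor_mem (y : ℝ) : ⌊2 * y⌋ - 2 * ⌊y⌋ ∈ Set.Icc (0 : ℤ) 1 := by
  have h₁ : 2 * ⌊y⌋ ≤ ⌊2 * y⌋ := Int.le_floor.2 (by push_cast; linarith [Int.floor_le y])
  have h₂ : ⌊2 * y⌋ < 2 * ⌊y⌋ + 2 :=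
    Int.floor_lt.2 (by push_cast; linarith [Int.lt_floor_add_one y])
  constructor <;> omega

lemma Irrational.floor_intCast_sub {y : ℝ} (hy : Irrational y) (m : ℤ) :
    ⌊(m : ℝ) - y⌋ = m - ⌊y⌋ - 1 := by
  have hceil : ⌈y⌉ = ⌊y⌋ + 1 :=
    (Int.ceil_eq_floor_add_one_iff_notMem y).2 fun ⟨k, hk⟩ => hy.ne_int k hk.symm
  rw [sub_eq_add_neg, Int.floor_intCast_add, Int.floor_neg, hceil]
  ring

lemma binDigit_succ (α : ℝ) (n : ℕ) :
    binDigit α (n + 1) = ⌊2 * (2 ^ n * α)⌋ - 2 * ⌊(2 : ℝ) ^ n * α⌋ := by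
  rw [binDigit, Nat.add_sub_cancel, pow_succ, mul_comm _ (2 : ℝ), mul_assoc]

lemma binDigit_mem_Icc (α : ℝ) {n : ℕ} (hn : 0 < n) :
    (binDigit α n : ℝ) ∈ Set.Icc (0 : ℝ) 1 := by
  obtain ⟨k, rfl⟩ := Nat.exists_eq_add_of_lt hn
  have h := Int.floor_two_mul_sub_two_mul_floor_mem ((2 : ℝ) ^ k * α)
  rw [Set.mem_Icc] at h ⊢
  rw [zero_add, binDigit_succ]
  exact_mod_cast h

lemma binDigit_add_intCast (α : ℝ) (m : ℤ) {n : ℕ} (hn : 0 < n) :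
    binDigit (α + m) n = binDigit α n := by
  obtain ⟨k, rfl⟩ := Nat.exists_eq_add_of_lt hn
  have hshift : (2 : ℝ) ^ k * (α + m) = 2 ^ k * α + ((2 ^ k * m : ℤ) : ℝ) := by push_cast; ring
  have hshift₂ : 2 * ((2 : ℝ) ^ k * α + ((2 ^ k * m : ℤ) : ℝ)) =
      2 * (2 ^ k * α) + ((2 * (2 ^ k * m) : ℤ) : ℝ) := by push_cast; ring
  rw [zero_add, binDigit_succ, binDigit_succ, hshift, hshift₂, Int.floor_add_intCast,
    Int.floor_add_intCast]
  ring

lemma binDigit_div_two (α : ℝ) {n : ℕ} (hn : 0 < n) : binDigit (α / 2) (n + 1) = binDigit α n := by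
  obtain ⟨k, rfl⟩ := Nat.exists_eq_add_of_lt hn
  rw [zero_add, binDigit_succ, binDigit_succ]
  congr 3 <;> ring

lemma binDigit_one_sub {α : ℝ} (hα : Irrational α) {n : ℕ} (hn : 0 < n) :
    binDigit (1 - α) n = 1 - binDigit α n := by
  obtain ⟨k, rfl⟩ := Nat.exists_eq_add_of_lt hn
  have hirr (j : ℕ) : Irrational ((2 : ℝ) ^ j * α) := by
    simpa using hα.natCast_mul (m := 2 ^ j) (by positivity)
  have h₁ : 2 * ((2 : ℝ) ^ k * (1 - α)) = ((2 ^ (k + 1) : ℤ) : ℝ) - 2 * (2 ^ k * α) := by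
    push_cast; ring
  have h₂ : (2 : ℝ) ^ k * (1 - α) = ((2 ^ k : ℤ) : ℝ) - 2 ^ k * α := by push_cast; ring
  have h₃ : Irrational (2 * ((2 : ℝ) ^ k * α)) := by
    simpa only [← mul_assoc, ← pow_succ'] using hirr (k + 1)
  rw [zero_add, binDigit_succ, binDigit_succ, h₁, h₂, h₃.floor_intCast_sub,
    (hirr k).floor_intCast_sub, pow_succ]
  ring

noncomputable def digitCount (α : ℝ) (n : ℕ) : ℝ :=
  ∑ i ∈ Finset.Icc 1 n, (binDigit α i : ℝ)

lemma digitFreq_eq_digitCount_div (α : ℝ) (n : ℕ) : digitFreq α n = digitCount α n / n := rfl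

lemma digitCount_eq_sum_range (α : ℝ) (n : ℕ) :
    digitCount α n = ∑ i ∈ range n, (binDigit α (i + 1) : ℝ) := by
  induction n with
  | zero => simp [digitCount]
  | succ n ih => rw [digitCount, sum_Icc_succ_top (by omega), ← digitCount, ih, sum_range_succ]

lemma digitCount_add_intCast (α : ℝ) (m : ℤ) (n : ℕ) : digitCount (α + m) n = digitCount α n := by
  simp only [digitCount_eq_sum_range, binDigit_add_intCast α m (Nat.succ_pos _)]

lemma digitCount_div_two_succ (α : ℝ) (n : ℕ) :
    digitCount (α / 2) (n + 1) = binDigit (α / 2) 1 + digitCount α n := by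
  simp only [digitCount_eq_sum_range, sum_range_succ', binDigit_div_two α (Nat.succ_pos _)]
  ring

lemma abs_digitCount_div_two_sub_le (α : ℝ) (n : ℕ) :
    |digitCount (α / 2) n - digitCount α n| ≤ 1 := by
  cases n with
  | zero => simp [digitCount]
  | succ n =>
    have h₁ := binDigit_mem_Icc (α / 2) one_pos
    have h₂ := binDigit_mem_Icc α n.succ_pos
    rw [digitCount_div_two_succ, digitCount_eq_sum_range α (n + 1), sum_range_succ,
      ← digitCount_eq_sum_range, abs_le]
    constructor <;> linarith [h₁.1, h₁.2, h₂.1, h₂.2]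

lemma abs_digitCount_div_two_pow_sub_le (α : ℝ) (c n : ℕ) :
    |digitCount (α / 2 ^ c) n - digitCount α n| ≤ c := by
  induction c with
  | zero => simp
  | succ c ih =>
    rw [pow_succ, ← div_div]
    calc |digitCount (α / 2 ^ c / 2) n - digitCount α n|
        ≤ |digitCount (α / 2 ^ c / 2) n - digitCount (α / 2 ^ c) n|
          + |digitCount (α / 2 ^ c) n - digitCount α n| := abs_sub_le _ _ _
      _ ≤ 1 + c := add_le_add (abs_digitCount_div_two_sub_le _ n) ih
      _ = (c + 1 : ℕ) := by push_cast; ring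

lemma digitCount_one_sub {α : ℝ} (hα : Irrational α) (n : ℕ) :
    digitCount (1 - α) n = n - digitCount α n := by
  simp only [digitCount_eq_sum_range, binDigit_one_sub hα (Nat.succ_pos _), Int.cast_sub,
    Int.cast_one, sum_sub_distrib, sum_const, card_range, nsmul_eq_mul, mul_one]

lemma digitFreq_mem_Icc (α : ℝ) (n : ℕ) : digitFreq α n ∈ Set.Icc (0 : ℝ) 1 := by
  have hbound : ∀ i ∈ range n, (binDigit α (i + 1) : ℝ) ∈ Set.Icc (0 : ℝ) 1 := fun i _ =>
    binDigit_mem_Icc α i.succ_pos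
  rw [digitFreq_eq_digitCount_div, digitCount_eq_sum_range]
  rcases n.eq_zero_or_pos with rfl | hn
  · simp
  refine ⟨div_nonneg (sum_nonneg fun i hi => (hbound i hi).1) n.cast_nonneg,
    div_le_one_of_le₀ ?_ n.cast_nonneg⟩
  calc ∑ i ∈ range n, (binDigit α (i + 1) : ℝ) ≤ ∑ _i ∈ range n, (1 : ℝ) :=
        sum_le_sum fun i hi => (hbound i hi).2
    _ = n := by simp

lemma digitFreq_one_sub {α : ℝ} (hα : Irrational α) {n : ℕ} (hn : 0 < n) :
    digitFreq (1 - α) n = 1 - digitFreq α n := by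
  have : (n : ℝ) ≠ 0 := by positivity
  rw [digitFreq_eq_digitCount_div, digitFreq_eq_digitCount_div, digitCount_one_sub hα]
  field_simp

lemma tendsto_digitFreq_sub_of_abs_digitCount_sub_le {α β C : ℝ}
    (h : ∀ n, |digitCount α n - digitCount β n| ≤ C) :
    Tendsto (fun n => digitFreq α n - digitFreq β n) atTop (𝓝 0) := by
  refine squeeze_zero_norm (fun n => ?_) (tendsto_const_div_atTop_nhds_zero_nat C)
  rw [digitFreq_eq_digitCount_div, digitFreq_eq_digitCount_div, ← sub_div, norm_div,
    Real.norm_eq_abs, Real.norm_natCast]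
  exact div_le_div_of_nonneg_right (h n) n.cast_nonneg

lemma tendsto_digitFreq_add_intCast_div_two_pow_sub (α : ℝ) (m : ℤ) (c : ℕ) :
    Tendsto (fun n => digitFreq ((α + m) / 2 ^ c) n - digitFreq α n) atTop (𝓝 0) :=
  tendsto_digitFreq_sub_of_abs_digitCount_sub_le (C := c) fun n => by
    simpa only [digitCount_add_intCast] using abs_digitCount_div_two_pow_sub_le (α + m) c n

lemma tendsto_half_of_limsup_eq {u v w : ℕ → ℝ} (hw : Bornology.IsBounded (Set.range w))
    (hu : Tendsto (fun n => u n - w n) atTop (𝓝 0))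
    (hv : Tendsto (fun n => v n + w n) atTop (𝓝 1))
    (h : ∀ ns : ℕ → ℕ, StrictMono ns → (∀ i, 0 < ns i) →
      limsup (fun i => u (ns i)) atTop = limsup (fun i => v (ns i)) atTop) :
    Tendsto w atTop (𝓝 (1 / 2)) := by
  refine tendsto_of_subseq_tendsto fun ns hns => ?_
  obtain ⟨φ, -, hφ⟩ := strictMono_subseq_of_tendsto_atTop hns
  -- dropping the first term makes the indices positive, as required by `h`
  set ms : ℕ → ℕ := fun i => ns (φ (i + 1))
  have hms : StrictMono ms := hφ.comp (strictMono_id.add_const 1)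
  have hms_pos : ∀ i, 0 < ms i := fun i => (Nat.zero_le _).trans_lt (hφ i.succ_pos)
  obtain ⟨c, -, ψ, hψ, hwc⟩ := tendsto_subseq_of_bounded hw fun i => mem_range_self (ms i)
  have hmsψ : Tendsto (ms ∘ ψ) atTop atTop := (hms.comp hψ).tendsto_atTop
  have huc : Tendsto (fun i => u (ms (ψ i))) atTop (𝓝 c) := by
    simpa using (hu.comp hmsψ).add hwc
  have hvc : Tendsto (fun i => v (ms (ψ i))) atTop (𝓝 (1 - c)) := by
    simpa using (hv.comp hmsψ).sub hwc
  have hc := h (ms ∘ ψ) (hms.comp hψ) fun i => hms_pos _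
  rw [Function.comp_def, huc.limsup_eq, hvc.limsup_eq] at hc
  obtain rfl : c = 1 / 2 := by linarith
  exact ⟨fun i => φ (ψ i + 1), hwc⟩

lemma sq_sub_sq_eq_dyadic {S : ℝ} {s : ℕ} (hS : S ^ 2 = s) (a : ℕ) :
    ((S - 1) / 2 ^ a) ^ 2 - (1 - S / 2 ^ (2 * a)) ^ 2 =
      (((s + 1) * 2 ^ (2 * a) - 2 ^ (4 * a) - s : ℤ) : ℝ) / 2 ^ (4 * a) := by
  push_cast
  field_simp
  rw [← hS]
  ring

lemma div_two_pow_mem_Ioo {x : ℝ} {a : ℕ} (h₀ : 0 < x) (h₁ : x < 2 ^ a) : x / 2 ^ a ∈ Set.Ioo 0 1 :=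
  ⟨by positivity, (div_lt_one (by positivity)).2 h₁⟩

/-- Condition (TU) implies simple normality of `√s` to base 2. -/
theorem conditionTU_implies_simply_normal
    (hTU : ∀ ns : ℕ → ℕ, StrictMono ns → (∀ i, 0 < ns i) →
      ∀ ω ω' : ℝ, ω ∈ Set.Ioo (0:ℝ) 1 → ω' ∈ Set.Ioo (0:ℝ) 1 →
      Irrational ω → Irrational ω' →
      (∃ m : ℤ, ∃ t : ℕ, ω ^ 2 - ω' ^ 2 = (m : ℝ) / 2 ^ t) →
      Filter.limsup (fun i => digitFreq ω (ns i)) Filter.atTop =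
        Filter.limsup (fun i => digitFreq ω' (ns i)) Filter.atTop) :
    ∀ s : ℕ, ¬ IsSquare s →
      Filter.Tendsto (fun n => digitFreq (Int.fract (Real.sqrt s)) n)
        Filter.atTop (nhds (1/2)) := by
  intro s hs
  set S := √(s : ℝ)
  have hS : Irrational S := irrational_sqrt_natCast_iff.2 hs
  have hS1 : 1 < S := by
    have : s ≠ 0 ∧ s ≠ 1 := ⟨by rintro rfl; exact hs ⟨0, rfl⟩, by rintro rfl; exact hs ⟨1, rfl⟩⟩
    exact Real.lt_sqrt zero_le_one |>.2 (by norm_cast; omega)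
  obtain ⟨a, ha⟩ := pow_unbounded_of_one_lt S one_lt_two
  have ha₂ : S < 2 ^ (2 * a) := ha.trans_le (pow_le_pow_right₀ one_le_two (by omega))
  have hSa : Irrational (S / 2 ^ (2 * a)) := by
    simpa using hS.div_natCast (m := 2 ^ (2 * a)) (by positivity)
  refine tendsto_half_of_limsup_eq (Metric.isBounded_Icc 0 1 |>.subset ?_) ?_ ?_
    fun ns hns hpos => hTU ns hns hpos ((S - 1) / 2 ^ a) (1 - S / 2 ^ (2 * a))
      (div_two_pow_mem_Ioo (by linarith) (by linarith)) ?_ ?_ ?_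
      ⟨_, _, sq_sub_sq_eq_dyadic (Real.sq_sqrt s.cast_nonneg) a⟩
  · exact range_subset_iff.2 (digitFreq_mem_Icc _)
  · rw [show S - 1 = Int.fract S + ((⌊S⌋ - 1 : ℤ) : ℝ) by
      push_cast; linarith [Int.fract_add_floor S]]
    exact tendsto_digitFreq_add_intCast_div_two_pow_sub _ _ _
  · have h := tendsto_digitFreq_add_intCast_div_two_pow_sub (Int.fract S) ⌊S⌋ (2 * a)
    rw [Int.fract_add_floor] at h
    refine (sub_zero (1 : ℝ) ▸ tendsto_const_nhds.sub h).congr' ?_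
    filter_upwards [eventually_gt_atTop 0] with n hn
    rw [digitFreq_one_sub hSa hn]
    ring
  · have h := div_two_pow_mem_Ioo (by linarith) ha₂
    exact ⟨sub_pos.2 h.2, sub_lt_self 1 h.1⟩
  · simpa using (hS.sub_intCast 1).div_natCast (m := 2 ^ a) (by positivity)
  · simpa using hSa.intCast_sub 1
end

section
/- Let ν, ν⁽¹⁾ ∈ (0,1) both be irrational and let n ≥ 1. For each i ≥ 1 define the hybrid point ν_i = ⌊2^{i−1}ν⌋·2^{−(i−1)} + frac(2^{i−1}ν⁽¹⁾)·2^{−(i−1)} (whose binary digits agree with those of ν in positions 1,…,i−1 and with those of ν⁽¹⁾ in positions i, i+1, …); note ν_1 = ν⁽¹⁾ and each ν_i is irrational. Write h_n(μ) = f_n(√μ) for irrational μ ∈ (0,1). Then there exists an integer m ≥ 1 such that h_n(ν_i) = h_n(ν) for all i > m, and consequently the total difference reduces to a finite sum of step-by-step partial differences: h_n(ν⁽¹⁾) − h_n(ν) = Σ_{i=1}^{m} (h_n(ν_i) − h_n(ν_{i+1})). -/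
/-!
The hybrid points `ν_i` converge to `ν` (they share its first `i - 1` binary digits), and
`h_n` is locally constant at `ν`: the first `n` digits of `√μ` are read off the floors of
`2^k √μ`, `k ≤ n`, and these floors are locally constant at the irrational point `√ν`.
Hence `h_n(ν_i) = h_n(ν)` for all large `i`, and the sum telescopes.
-/

open Filter Finset Set

open Topology

theorem Irrational.eventually_floor_eq {x : ℝ} (hx : Irrational x) :
    ∀ᶠ y in 𝓝 x, ⌊y⌋ = ⌊x⌋ := by
  have h_floor_lt : (⌊x⌋ : ℝ) < x := (Int.floor_le x).lt_of_ne (hx.ne_int ⌊x⌋).symm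
  filter_upwards [Ioo_mem_nhds h_floor_lt (Int.lt_floor_add_one x)] with y hy
  exact Int.floor_eq_iff.mpr ⟨hy.1.le, hy.2⟩

theorem digitFreq_congr {α β : ℝ} {n : ℕ}
    (h : ∀ k ≤ n, ⌊(2:ℝ) ^ k * α⌋ = ⌊(2:ℝ) ^ k * β⌋) :
    digitFreq α n = digitFreq β n := by
  unfold digitFreq binDigit
  congr 1
  refine Finset.sum_congr rfl fun i hi => ?_
  have hin : i ≤ n := (Finset.mem_Icc.mp hi).2
  rw [h i hin, h (i - 1) (by omega)]

theorem Irrational.eventually_digitFreq_eq {α : ℝ} (hα : Irrational α) (n : ℕ) :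
    ∀ᶠ β in 𝓝 α, digitFreq β n = digitFreq α n := by
  have h_floor : ∀ k, ∀ᶠ β in 𝓝 α, ⌊(2:ℝ) ^ k * β⌋ = ⌊(2:ℝ) ^ k * α⌋ := fun k =>
    ((continuous_const_mul _).tendsto α).eventually
      (Irrational.eventually_floor_eq (by simpa using hα.natCast_mul (pow_ne_zero k two_ne_zero)))
  filter_upwards [(eventually_all_finset (Finset.range (n + 1))).mpr fun k _ => h_floor k]
    with β hβ
  exact digitFreq_congr fun k hk => hβ k (Finset.mem_range.mpr (by omega))

theorem sum_Icc_one_sub_succ {G : Type*} [AddCommGroup G] (f : ℕ → G) (m : ℕ) :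
    ∑ i ∈ Icc 1 m, (f i - f (i + 1)) = f 1 - f (m + 1) := by
  rw [← Finset.Ico_add_one_right_eq_Icc, Finset.sum_Ico_eq_sum_range]
  simpa [add_comm, add_left_comm] using Finset.sum_range_sub' (fun k => f (1 + k)) m

/-- `hybridPoint ν ν₁ k` is the paper's `ν_{k+1}`: the binary digits of `ν` in positions
`1, …, k`, followed by those of `ν₁` from position `k + 1` on. -/
noncomputable def hybridPoint (ν ν₁ : ℝ) (k : ℕ) : ℝ :=
  (⌊(2:ℝ) ^ k * ν⌋ : ℝ) / 2 ^ k + Int.fract ((2:ℝ) ^ k * ν₁) / 2 ^ k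

theorem hybridPoint_zero {ν ν₁ : ℝ} (hν : ν ∈ Ico (0:ℝ) 1) (hν₁ : ν₁ ∈ Ico (0:ℝ) 1) :
    hybridPoint ν ν₁ 0 = ν₁ := by
  simp [hybridPoint, Int.floor_eq_zero_iff.mpr hν, Int.fract_eq_self.mpr hν₁]

theorem hybridPoint_eq_ratCast_add (ν ν₁ : ℝ) (k : ℕ) :
    hybridPoint ν ν₁ k = (((⌊(2:ℝ) ^ k * ν⌋ - ⌊(2:ℝ) ^ k * ν₁⌋ : ℤ) / 2 ^ k : ℚ) : ℝ) + ν₁ := by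
  simp only [hybridPoint, Int.fract]
  push_cast
  field_simp
  ring

theorem Irrational.hybridPoint {ν₁ : ℝ} (hν₁ : Irrational ν₁) (ν : ℝ) (k : ℕ) :
    Irrational (hybridPoint ν ν₁ k) := by
  rw [hybridPoint_eq_ratCast_add]
  exact hν₁.ratCast_add _

theorem abs_hybridPoint_sub_le (ν ν₁ : ℝ) (k : ℕ) :
    |hybridPoint ν ν₁ k - ν| ≤ (1 / 2) ^ k := by
  have h_pow : (0:ℝ) < 2 ^ k := by positivity
  have h_sub : hybridPoint ν ν₁ k - ν =
      (Int.fract ((2:ℝ) ^ k * ν₁) - Int.fract ((2:ℝ) ^ k * ν)) / 2 ^ k := by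
    simp only [hybridPoint, Int.fract]
    field_simp
    ring
  have h_fract : |Int.fract ((2:ℝ) ^ k * ν₁) - Int.fract ((2:ℝ) ^ k * ν)| ≤ 1 :=
    (Int.abs_sub_lt_one_of_floor_eq_floor (by simp)).le
  rw [h_sub, abs_div, abs_of_pos h_pow, div_le_iff₀ h_pow, ← mul_pow]
  simpa using h_fract

theorem tendsto_hybridPoint (ν ν₁ : ℝ) : Tendsto (hybridPoint ν ν₁) atTop (𝓝 ν) :=
  tendsto_iff_norm_sub_tendsto_zero.mpr <| squeeze_zero (fun _ => abs_nonneg _)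
    (abs_hybridPoint_sub_le ν ν₁)
    (tendsto_pow_atTop_nhds_zero_of_lt_one (by norm_num) (by norm_num))

theorem total_difference_finite_general (ν ν₁ : ℝ)
    (hν : ν ∈ Set.Ioo (0:ℝ) 1) (hν₁ : ν₁ ∈ Set.Ioo (0:ℝ) 1)
    (hiν : Irrational ν) (hiν₁ : Irrational ν₁) (n : ℕ) :
    ∀ hyb : ℕ → ℝ,
      (hyb = fun i => (⌊(2:ℝ) ^ (i - 1) * ν⌋ : ℝ) / 2 ^ (i - 1)
          + Int.fract ((2:ℝ) ^ (i - 1) * ν₁) / 2 ^ (i - 1)) →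
      hyb 1 = ν₁ ∧ (∀ i : ℕ, 1 ≤ i → Irrational (hyb i)) ∧
      ∃ m : ℕ, 1 ≤ m ∧
        (∀ i : ℕ, m < i →
          digitFreq (Real.sqrt (hyb i)) n = digitFreq (Real.sqrt ν) n) ∧
        digitFreq (Real.sqrt ν₁) n - digitFreq (Real.sqrt ν) n =
          ∑ i ∈ Finset.Icc 1 m,
            (digitFreq (Real.sqrt (hyb i)) n - digitFreq (Real.sqrt (hyb (i + 1))) n) := by
  intro hyb hyb_eq
  replace hyb_eq : hyb = fun i => hybridPoint ν ν₁ (i - 1) := hyb_eq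
  subst hyb_eq
  have h_first : hybridPoint ν ν₁ 0 = ν₁ := hybridPoint_zero (Ioo_subset_Ico_self hν)
    (Ioo_subset_Ico_self hν₁)
  have h_sqrt : Irrational (Real.sqrt ν) :=
    .of_pow 2 (by rwa [Real.sq_sqrt hν.1.le])
  have h_eventually : ∀ᶠ i in atTop,
      digitFreq (Real.sqrt (hybridPoint ν ν₁ (i - 1))) n = digitFreq (Real.sqrt ν) n :=
    ((tendsto_hybridPoint ν ν₁).comp (tendsto_sub_atTop_nat 1)).eventually
      ((Real.continuous_sqrt.tendsto ν).eventually (h_sqrt.eventually_digitFreq_eq n))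
  obtain ⟨N, hN⟩ := eventually_atTop.mp h_eventually
  refine ⟨h_first, fun i _ => hiν₁.hybridPoint ν (i - 1), N + 1, by omega,
    fun i hi => hN i (by omega), ?_⟩
  rw [sum_Icc_one_sub_succ (fun i => digitFreq (Real.sqrt (hybridPoint ν ν₁ (i - 1))) n)]
  simp only [Nat.sub_self, h_first, hN (N + 1 + 1) (by omega)]

/-- Lemma 5: The change `h_n(ν⁽¹⁾) − h_n(ν)` of `h_n = f_n(√·)` is a
finite telescoping sum of step-by-step partial differences through the hybrid points
`ν_i` (digits of `ν` up to position `i−1`, digits of `ν⁽¹⁾` from position `i` on). -/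
theorem total_difference_finite (ν ν₁ : ℝ)
    (hν : ν ∈ Set.Ioo (0:ℝ) 1) (hν₁ : ν₁ ∈ Set.Ioo (0:ℝ) 1)
    (hiν : Irrational ν) (hiν₁ : Irrational ν₁) (n : ℕ) (hn : 1 ≤ n) :
    ∀ hyb : ℕ → ℝ,
      (hyb = fun i => (⌊(2:ℝ) ^ (i - 1) * ν⌋ : ℝ) / 2 ^ (i - 1)
          + Int.fract ((2:ℝ) ^ (i - 1) * ν₁) / 2 ^ (i - 1)) →
      hyb 1 = ν₁ ∧ (∀ i : ℕ, 1 ≤ i → Irrational (hyb i)) ∧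
      ∃ m : ℕ, 1 ≤ m ∧
        (∀ i : ℕ, m < i →
          digitFreq (Real.sqrt (hyb i)) n = digitFreq (Real.sqrt ν) n) ∧
        digitFreq (Real.sqrt ν₁) n - digitFreq (Real.sqrt ν) n =
          ∑ i ∈ Finset.Icc 1 m,
            (digitFreq (Real.sqrt (hyb i)) n - digitFreq (Real.sqrt (hyb (i + 1))) n) :=
  total_difference_finite_general ν ν₁ hν hν₁ hiν hiν₁ n
end
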